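/- Let $U, V$ be symmetric positive definite matrices and suppose $X$ satisfies the Sylvester equation $X U + V X = W$. Then $\|X\| \leq \frac{\|W\|}{\lambda_{\min}(U) + \lambda_{\min}(V)}$, where $\|\cdot\|$ denotes the operator norm and $\lambda_{\min}$ the smallest eigenvalue. In particular $\|X\| \leq \|W\| / \lambda_{\min}(V)$. -/

import Mathlib

open Matrix MeasureTheory

/-- The symmetric positive semidefinite square root of a matrix (zero if the
matrix is not positive semidefinite). -/
noncomputable def msqrt {d : ℕ} (A : Matrix (Fin d) (Fin d) ℝ) : Matrix (Fin d) (Fin d) ℝ :=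
  open scoped Classical in
  if h : A.PosSemidef then
    (h.1.eigenvectorUnitary : Matrix (Fin d) (Fin d) ℝ) *
      diagonal ((↑) ∘ Real.sqrt ∘ h.1.eigenvalues) *
      (star (h.1.eigenvectorUnitary : Matrix (Fin d) (Fin d) ℝ))
  else 0

/-- The operator (spectral) norm of a matrix, as the norm of the induced map on
Euclidean space. -/
noncomputable def opNorm {d : ℕ} (A : Matrix (Fin d) (Fin d) ℝ) : ℝ :=
  ‖LinearMap.toContinuousLinearMap (Matrix.toEuclideanLin A)‖

/-- The smallest eigenvalue of a symmetric matrix (zero if not symmetric). -/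
noncomputable def lamMin {d : ℕ} (A : Matrix (Fin d) (Fin d) ℝ) : ℝ :=
  open scoped Classical in
  if h : A.IsHermitian then ⨅ i, h.eigenvalues i else 0

/-- Interpret a plain vector as a point of Euclidean space. -/
noncomputable def toE {d : ℕ} (v : Fin d → ℝ) : EuclideanSpace ℝ (Fin d) :=
  (WithLp.equiv 2 (Fin d → ℝ)).symm v

/-- The matrix geometric mean `B # C = B^{1/2} (B^{-1/2} C B^{-1/2})^{1/2} B^{1/2}`. -/
noncomputable def gmean {d : ℕ} (B C : Matrix (Fin d) (Fin d) ℝ) : Matrix (Fin d) (Fin d) ℝ :=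
  msqrt B * msqrt ((msqrt B)⁻¹ * C * (msqrt B)⁻¹) * msqrt B

open scoped RealInnerProductSpace

noncomputable def mCLM {d : ℕ} (A : Matrix (Fin d) (Fin d) ℝ) :
    EuclideanSpace ℝ (Fin d) →L[ℝ] EuclideanSpace ℝ (Fin d) :=
  LinearMap.toContinuousLinearMap (Matrix.toEuclideanLin A)

lemma mCLM_mul {d : ℕ} (A B : Matrix (Fin d) (Fin d) ℝ) (x : EuclideanSpace ℝ (Fin d)) :
    mCLM (A * B) x = mCLM A (mCLM B x) := by
  simp [mCLM, Matrix.toEuclideanLin_apply, Matrix.mulVec_mulVec]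

lemma mCLM_add {d : ℕ} (A B : Matrix (Fin d) (Fin d) ℝ) (x : EuclideanSpace ℝ (Fin d)) :
    mCLM (A + B) x = mCLM A x + mCLM B x := by
  simp [mCLM, map_add]

lemma inner_mCLM_transpose {d : ℕ} (A : Matrix (Fin d) (Fin d) ℝ)
    (v x : EuclideanSpace ℝ (Fin d)) :
    ⟪mCLM Aᵀ v, x⟫ = ⟪v, mCLM A x⟫ := by
  simp only [mCLM, LinearMap.coe_toContinuousLinearMap', Matrix.toEuclideanLin_apply,
    PiLp.inner_apply, RCLike.inner_apply, conj_trivial]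
  simp only [PiLp.toLp_apply, Matrix.mulVec, dotProduct, Matrix.transpose_apply]
  simp only [Finset.sum_mul, Finset.mul_sum]
  rw [Finset.sum_comm]
  apply Finset.sum_congr rfl; intro i _; apply Finset.sum_congr rfl; intro j _; ring

lemma lamMin_eq {d : ℕ} {A : Matrix (Fin d) (Fin d) ℝ} (hA : A.IsHermitian) :
    lamMin A = ⨅ i, hA.eigenvalues i := by
  unfold lamMin
  rw [dif_pos hA]

lemma mCLM_eigenvectorBasis {d : ℕ} {A : Matrix (Fin d) (Fin d) ℝ} (hA : A.IsHermitian) (j : Fin d) :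
    mCLM A (hA.eigenvectorBasis j) = hA.eigenvalues j • hA.eigenvectorBasis j := by
  ext i
  have := congrFun (hA.mulVec_eigenvectorBasis j) i
  simpa [mCLM, Matrix.toEuclideanLin_apply] using this

lemma inner_lamMin {d : ℕ} {A : Matrix (Fin d) (Fin d) ℝ} (hA : A.IsHermitian)
    (x : EuclideanSpace ℝ (Fin d)) :
    lamMin A * ‖x‖ ^ 2 ≤ ⟪x, mCLM A x⟫ := by
  set b := hA.eigenvectorBasis with hb
  have hAt : Aᵀ = A := by
    rw [← Matrix.conjTranspose_eq_transpose_of_trivial, hA.eq]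
  have h1 : ⟪x, mCLM A x⟫ = ∑ i, hA.eigenvalues i * ⟪x, b i⟫ ^ 2 := by
    rw [← b.sum_inner_mul_inner x (mCLM A x)]
    apply Finset.sum_congr rfl
    intro i _
    rw [← inner_mCLM_transpose A (b i) x, hAt, mCLM_eigenvectorBasis hA i,
      real_inner_smul_left]
    rw [real_inner_comm (b i) x]
    ring
  have h2 : (‖x‖ : ℝ) ^ 2 = ∑ i, ⟪x, b i⟫ ^ 2 := by
    rw [← real_inner_self_eq_norm_sq, ← b.sum_inner_mul_inner x x]
    apply Finset.sum_congr rfl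
    intro i _
    rw [real_inner_comm (b i) x]; ring
  rw [h1, h2, Finset.mul_sum]
  apply Finset.sum_le_sum
  intro i _
  apply mul_le_mul_of_nonneg_right _ (sq_nonneg _)
  rw [lamMin_eq hA]
  exact ciInf_le (Finite.bddBelow_range _) i

lemma lamMin_pos {d : ℕ} {A : Matrix (Fin d) (Fin d) ℝ} (hA : A.PosDef) (hd : 0 < d) :
    0 < lamMin A := by
  haveI : Nonempty (Fin d) := ⟨⟨0, hd⟩⟩
  rw [lamMin_eq hA.1]
  obtain ⟨i, hi⟩ := exists_eq_ciInf_of_finite (f := hA.1.eigenvalues)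
  rw [← hi]
  exact hA.eigenvalues_pos i

lemma exists_max_vector {d : ℕ} (hd : 0 < d)
    (T : EuclideanSpace ℝ (Fin d) →L[ℝ] EuclideanSpace ℝ (Fin d)) :
    ∃ u : EuclideanSpace ℝ (Fin d), ‖u‖ = 1 ∧
      IsMaxOn (fun x => ‖T x‖) (Metric.sphere 0 1) u ∧ ‖T u‖ = ‖T‖ := by
  have hne : (Metric.sphere (0 : EuclideanSpace ℝ (Fin d)) 1).Nonempty := by
    refine ⟨EuclideanSpace.single ⟨0, hd⟩ (1 : ℝ), ?_⟩
    simp [mem_sphere_zero_iff_norm, EuclideanSpace.norm_single]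
  obtain ⟨u, hu_mem, hmax⟩ := (isCompact_sphere (0 : EuclideanSpace ℝ (Fin d)) 1).exists_isMaxOn
    hne (T.continuous.norm.continuousOn)
  have hu1 : ‖u‖ = 1 := mem_sphere_zero_iff_norm.mp hu_mem
  refine ⟨u, hu1, hmax, le_antisymm (by have := T.le_opNorm u; rwa [hu1, mul_one] at this) ?_⟩
  apply T.opNorm_le_bound (norm_nonneg _)
  intro x
  rcases eq_or_ne x 0 with rfl | hx
  · simp
  · have hxn : (0 : ℝ) < ‖x‖ := norm_pos_iff.mpr hx
    have hmem : (‖x‖⁻¹ • x) ∈ Metric.sphere (0 : EuclideanSpace ℝ (Fin d)) 1 := by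
      simp [mem_sphere_zero_iff_norm, norm_smul, abs_of_pos (inv_pos.mpr hxn),
        inv_mul_cancel₀ hxn.ne']
    have h5 : ‖x‖⁻¹ * ‖T x‖ ≤ ‖T u‖ := by
      simpa [T.map_smul, norm_smul, Real.norm_eq_abs,
        abs_of_pos (inv_pos.mpr hxn)] using hmax hmem
    calc ‖T x‖ = ‖x‖ * (‖x‖⁻¹ * ‖T x‖) := by field_simp
    _ ≤ ‖x‖ * ‖T u‖ := mul_le_mul_of_nonneg_left h5 hxn.le
    _ = ‖T u‖ * ‖x‖ := mul_comm _ _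

lemma mCLM_symmetric {d : ℕ} {A : Matrix (Fin d) (Fin d) ℝ} (hA : Aᵀ = A)
    (x y : EuclideanSpace ℝ (Fin d)) : ⟪mCLM A x, y⟫ = ⟪x, mCLM A y⟫ := by
  rw [← inner_mCLM_transpose A x y, hA]

lemma reApply_sq {d : ℕ} (X : Matrix (Fin d) (Fin d) ℝ) (x : EuclideanSpace ℝ (Fin d)) :
    (mCLM (Xᵀ * X)).reApplyInnerSelf x = ‖mCLM X x‖ ^ 2 := by
  rw [ContinuousLinearMap.reApplyInnerSelf]
  rw [show ⟪(mCLM (Xᵀ * X)) x, x⟫ = ‖mCLM X x‖ ^ 2 from ?_]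
  · simp
  · rw [mCLM_mul, inner_mCLM_transpose, real_inner_self_eq_norm_sq]

theorem sylvester_bound {d : ℕ}
    (U V W X : Matrix (Fin d) (Fin d) ℝ) (hU : U.PosDef) (hV : V.PosDef)
    (hX : X * U + V * X = W) :
    opNorm X ≤ opNorm W / (lamMin U + lamMin V) ∧ opNorm X ≤ opNorm W / lamMin V := by
  have hopX : opNorm X = ‖mCLM X‖ := rfl
  have hopW : opNorm W = ‖mCLM W‖ := rfl
  have hWnn : 0 ≤ opNorm W := by rw [hopW]; exact norm_nonneg _
  rcases Nat.eq_zero_or_pos d with rfl | hd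
  · have hz : ∀ B : Matrix (Fin 0) (Fin 0) ℝ, lamMin B = 0 := by
      intro B
      unfold lamMin
      split
      · exact Real.iInf_of_isEmpty _
      · rfl
    have hX0 : opNorm X = 0 := by
      rw [hopX]
      have : mCLM X = 0 := by
        ext x i
        exact i.elim0
      rw [this, norm_zero]
    rw [hX0, hz U, hz V]
    norm_num
  · have ha : 0 < lamMin U := lamMin_pos hU hd
    have hb : 0 < lamMin V := lamMin_pos hV hd
    set T := mCLM X with hT
    set t := ‖T‖ with ht
    rcases eq_or_lt_of_le (norm_nonneg T) with h0 | hpos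
    · constructor
      · rw [hopX, ht, ← h0]; exact div_nonneg hWnn (by linarith)
      · rw [hopX, ht, ← h0]; exact div_nonneg hWnn hb.le
    · -- main case
      obtain ⟨u, hu1, hmax, hTu⟩ := exists_max_vector hd T
      set S := mCLM (Xᵀ * X) with hSdef
      have hS : IsSelfAdjoint S :=
        ContinuousLinearMap.isSelfAdjoint_iff_isSymmetric.mpr
          (fun x y => mCLM_symmetric (by rw [Matrix.transpose_mul, Matrix.transpose_transpose]) x y)
      have hmax' : IsMaxOn S.reApplyInnerSelf (Metric.sphere 0 ‖u‖) u := by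
        intro x hx
        rw [hu1] at hx
        have h6 := hmax hx
        simp only [Set.mem_setOf_eq] at h6 ⊢
        show (mCLM (Xᵀ * X)).reApplyInnerSelf x ≤ (mCLM (Xᵀ * X)).reApplyInnerSelf u
        rw [reApply_sq, reApply_sq]
        exact pow_le_pow_left₀ (norm_nonneg _) h6 2
      have hSu : S u = (t ^ 2 : ℝ) • u := by
        have h7 := hS.eq_smul_self_of_isLocalExtrOn (Or.inr hmax'.localize)
        have h8 : S.rayleighQuotient u = t ^ 2 := by
          show (mCLM (Xᵀ * X)).reApplyInnerSelf u / ‖u‖ ^ 2 = t ^ 2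
          rw [reApply_sq, hu1, hTu, one_pow, div_one, ht]
        rw [h7, h8]
        rfl
      set v : EuclideanSpace ℝ (Fin d) := t⁻¹ • (T u) with hv
      have hv1 : ‖v‖ = 1 := by
        rw [hv, norm_smul, Real.norm_eq_abs, abs_of_pos (inv_pos.mpr hpos), hTu,
          inv_mul_cancel₀ hpos.ne']
      have hTuv : T u = t • v := by
        rw [hv, smul_smul, mul_inv_cancel₀ hpos.ne', one_smul]
      have hXtv : mCLM Xᵀ v = t • u := by
        rw [hv, (mCLM Xᵀ).map_smul, show (mCLM Xᵀ) (T u) = S u from (mCLM_mul Xᵀ X u).symm, hSu,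
          smul_smul]
        congr 1
        field_simp
      have e1 : ⟪v, mCLM W u⟫ ≤ opNorm W := by
        calc ⟪v, mCLM W u⟫ ≤ ‖v‖ * ‖mCLM W u‖ := real_inner_le_norm _ _
        _ = ‖mCLM W u‖ := by rw [hv1, one_mul]
        _ ≤ ‖mCLM W‖ * ‖u‖ := (mCLM W).le_opNorm u
        _ = opNorm W := by rw [hu1, mul_one, hopW]
      have e2 : ⟪v, mCLM W u⟫ = t * ⟪u, mCLM U u⟫ + t * ⟪v, mCLM V v⟫ := by
        rw [← hX, mCLM_add, inner_add_right, mCLM_mul, mCLM_mul,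
          ← inner_mCLM_transpose X v (mCLM U u), hXtv, real_inner_smul_left,
          show mCLM X u = t • v from hTuv, (mCLM V).map_smul, real_inner_smul_right]
      have e3 : lamMin U ≤ ⟪u, mCLM U u⟫ := by
        have := inner_lamMin hU.1 u
        rwa [hu1, one_pow, mul_one] at this
      have e4 : lamMin V ≤ ⟪v, mCLM V v⟫ := by
        have := inner_lamMin hV.1 v
        rwa [hv1, one_pow, mul_one] at this
      have key : t * (lamMin U + lamMin V) ≤ opNorm W := by
        nlinarith [e1, e2, e3, e4]
      constructor
      · rw [hopX, le_div_iff₀ (by linarith)]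
        exact key
      · rw [hopX, le_div_iff₀ hb]
        nlinarith
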